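/- arXiv:1503.00948 — 4 statements merged into one kernel-verified Lean document; each statement's English description precedes it below -/
import Mathlib

section
/- Let F ⊣ G be the Galois connection associated to an extension L of L₀, and suppose G(T_max) = T_max0. Let T₀ be a theory of L₀ and T = F(T₀). If T₀ is Hilbert-Post complete in L₀ (T₀ is consistent and every theory containing T₀ equals T₀ or T_max0) and T is Hilbert-Post complete with respect to L₀ (T is consistent and every theory of L containing T is L₀-derivable from T), then T is Hilbert-Post complete in L: T is consistent and every theory of L containing T equals T or T_max. -/
/-- If `T₀` is Hilbert-Post complete in `L₀` and `T = F T₀` is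
Hilbert-Post complete with respect to `L₀`, then `T` is Hilbert-Post complete in `L`. -/
theorem hp_complete_lift {L₀ L : Type*} [CompleteLattice L₀] [CompleteLattice L]
    (F : L₀ → L) (G : L → L₀) (gc : GaloisConnection F G) (hG : G ⊤ = ⊤)
    (T₀ : L₀) (T : L) (hT : T = F T₀)
    -- `T₀` is Hilbert-Post complete in `L₀`:
    (h₀cons : T₀ ≠ ⊤) (h₀comp : ∀ T₀' : L₀, T₀ ≤ T₀' → T₀' = T₀ ∨ T₀' = ⊤)
    -- `T` is Hilbert-Post complete with respect to `L₀`: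
    (hcons : T ≠ ⊤) (hrel : ∀ T' : L, T ≤ T' → ∃ T₀' : L₀, T' = T ⊔ F T₀') :
    T ≠ ⊤ ∧ ∀ T' : L, T ≤ T' → T' = T ∨ T' = ⊤ := by
  -- First show F ⊤ = ⊤ using hrel applied to ⊤.
  have hFsup : ∀ a b : L₀, F (a ⊔ b) = F a ⊔ F b := fun a b => gc.l_sup
  have hFtop : F (⊤ : L₀) = ⊤ := by
    obtain ⟨S₀, hS₀⟩ := hrel ⊤ le_top
    rcases h₀comp (T₀ ⊔ S₀) le_sup_left with h | h
    · exfalso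
      apply hcons
      have : (⊤ : L) = T := by
        rw [hS₀, hT, ← hFsup, h]
      exact this.symm
    · have : F (T₀ ⊔ S₀) = ⊤ := by rw [hFsup, hT] at *; rw [← hS₀]
      rw [← h, this]
  refine ⟨hcons, fun T' hTT' => ?_⟩
  obtain ⟨S₀, hS₀⟩ := hrel T' hTT'
  rcases h₀comp (T₀ ⊔ S₀) le_sup_left with h | h
  · left
    have : F S₀ ≤ T := hT ▸ gc.monotone_l (sup_eq_left.mp h)
    rw [hS₀, sup_eq_left.mpr this]
  · right
    rw [hS₀, hT, ← hFsup, h, hFtop]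
end

section
/- Relative Hilbert-Post completeness composes: let L₀ ⊆ L₁ ⊆ L be logics with Galois connections F₁ ⊣ G₁ (between theories of L₀ and L₁) and F₂ ⊣ G₂ (between theories of L₁ and L), and let F = F₂ ∘ F₁. Let T₀ be a theory of L₀, T₁ = F₁(T₀), and T a theory of L containing F₂(T₁). If T₁ is Hilbert-Post complete with respect to L₀ and T is Hilbert-Post complete with respect to L₁, then T is Hilbert-Post complete with respect to L₀. -/
/-- Relative Hilbert-Post completeness composes along
`L₀ ⊆ L₁ ⊆ L` with Galois connections `F₁ ⊣ G₁` and `F₂ ⊣ G₂`, `F = F₂ ∘ F₁`. -/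
theorem hp_complete_compose {L₀ L₁ L : Type*}
    [CompleteLattice L₀] [CompleteLattice L₁] [CompleteLattice L]
    (F₁ : L₀ → L₁) (G₁ : L₁ → L₀) (gc₁ : GaloisConnection F₁ G₁)
    (F₂ : L₁ → L) (G₂ : L → L₁) (gc₂ : GaloisConnection F₂ G₂)
    (T₀ : L₀) (T₁ : L₁) (hT₁ : T₁ = F₁ T₀) (T : L) (hT : F₂ T₁ ≤ T)
    -- `T₁` is Hilbert-Post complete with respect to `L₀`:
    (h₁cons : T₁ ≠ ⊤) (h₁rel : ∀ T' : L₁, T₁ ≤ T' → ∃ T₀' : L₀, T' = T₁ ⊔ F₁ T₀')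
    -- `T` is Hilbert-Post complete with respect to `L₁`:
    (hcons : T ≠ ⊤) (hrel : ∀ T' : L, T ≤ T' → ∃ T₁' : L₁, T' = T ⊔ F₂ T₁') :
    -- `T` is Hilbert-Post complete with respect to `L₀` (via `F = F₂ ∘ F₁`):
    T ≠ ⊤ ∧ ∀ T' : L, T ≤ T' → ∃ T₀' : L₀, T' = T ⊔ F₂ (F₁ T₀') := by
  refine ⟨hcons, fun T' hT' => ?_⟩
  obtain ⟨T₁', hEq⟩ := hrel T' hT'
  obtain ⟨T₀', h₀⟩ := h₁rel (T₁ ⊔ T₁') le_sup_left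
  refine ⟨T₀', ?_⟩
  have : T' = T ⊔ F₂ (T₁ ⊔ T₁') := by
    rw [gc₂.l_sup]
    rw [hEq]
    rw [← sup_assoc, sup_eq_left.mpr hT]
  rw [this, h₀, gc₂.l_sup, ← sup_assoc, sup_eq_left.mpr hT]
end

section
/- Let F ⊣ G be the Galois connection of an extension L of L₀, T a theory of L, and Th(E) the theory generated by a set E of formulas of L (so Th restricted to theories of L₀ agrees with F, i.e. Th(T₀') = F(T₀') for every theory T₀' of L₀). Then every theory T' of L containing T is L₀-derivable from T if and only if for every formula e of L there exists a set E₀ of formulas of L₀ such that T + Th({e}) = T + Th(E₀). -/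
/-- Every theory `T'` of `L` containing `T` is `L₀`-derivable from `T`
iff each single formula `e` of `L` is `L₀`-derivable from `T`, i.e. `{e}` is
`T`-equivalent to some set `E₀` of formulas of `L₀`.
Theories of `L` are the closed sets of the closure operator `Th` on sets of formulas;
`Form₀` is the set of formulas of `L₀`, `Th₀` is the deductive closure of `L₀`
(mapping sets of `L₀`-formulas to sets of `L₀`-formulas), and `Th E₀ = Th (Th₀ E₀)`
for sets `E₀` of `L₀`-formulas expresses that `Th` restricted to theories of `L₀`
agrees with `F`. Joins are given by `T + Th(E) = Th (T ∪ E)`. -/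
theorem derivable_theories_iff_derivable_formulas {Form : Type*} (Form₀ : Set Form)
    (Th : ClosureOperator (Set Form)) (Th₀ : ClosureOperator (Set Form))
    (hTh₀ : ∀ E : Set Form, E ⊆ Form₀ → Th₀ E ⊆ Form₀)
    (hcompat : ∀ E : Set Form, E ⊆ Form₀ → Th E = Th (Th₀ E))
    (T : Set Form) (hT : Th T = T) :
    (∀ T' : Set Form, Th T' = T' → T ⊆ T' →
        ∃ T₀' : Set Form, T₀' ⊆ Form₀ ∧ Th₀ T₀' = T₀' ∧ T' = Th (T ∪ T₀')) ↔
    (∀ e : Form, ∃ E₀ : Set Form, E₀ ⊆ Form₀ ∧ Th (T ∪ {e}) = Th (T ∪ E₀)) := by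
  constructor
  · intro h e
    obtain ⟨T₀', h₀, _, hEq⟩ := h (Th (T ∪ {e})) (Th.idempotent _)
      ((Set.subset_union_left).trans (Th.le_closure _))
    exact ⟨T₀', h₀, hEq⟩
  · intro h T' hT' hTT'
    refine ⟨Th₀ (T' ∩ Form₀), hTh₀ _ Set.inter_subset_right, Th₀.idempotent _, ?_⟩
    have hsub0 : Th₀ (T' ∩ Form₀) ⊆ T' := by
      have h1 : Th₀ (T' ∩ Form₀) ⊆ Th (Th₀ (T' ∩ Form₀)) := Th.le_closure _
      have h2 : Th (Th₀ (T' ∩ Form₀)) = Th (T' ∩ Form₀) :=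
        (hcompat _ Set.inter_subset_right).symm
      calc Th₀ (T' ∩ Form₀) ⊆ Th (T' ∩ Form₀) := h2 ▸ h1
        _ ⊆ Th T' := Th.monotone Set.inter_subset_left
        _ = T' := hT'
    apply Set.Subset.antisymm
    · intro e he
      obtain ⟨E₀, hE₀, hEq⟩ := h e
      have hET' : E₀ ⊆ T' := by
        have : E₀ ⊆ Th (T ∪ E₀) := Set.subset_union_right.trans (Th.le_closure _)
        rw [← hEq] at this
        refine this.trans ?_
        calc Th (T ∪ {e}) ⊆ Th T' :=
              Th.monotone (Set.union_subset hTT' (Set.singleton_subset_iff.mpr he))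
          _ = T' := hT'
      have hE₀sub : E₀ ⊆ Th₀ (T' ∩ Form₀) :=
        (Set.subset_inter hET' hE₀).trans (Th₀.le_closure _)
      have he' : e ∈ Th (T ∪ {e}) :=
        (Set.subset_union_right.trans (Th.le_closure _)) rfl
      rw [hEq] at he'
      exact Th.monotone (Set.union_subset Set.subset_union_left
        (hE₀sub.trans Set.subset_union_right)) he'
    · calc Th (T ∪ Th₀ (T' ∩ Form₀)) ⊆ Th T' :=
            Th.monotone (Set.union_subset hTT' hsub0)
        _ = T' := hT'
end

section
/- In the decorated logic for exceptions L_exc, every propagator a : X → Y is provably equal (strong equation derivable in the theory of exceptions T_exc) either to a pure term u : X → Y, or to throw_Y ∘ u for some pure term u : X → P. -/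
/-! The decorated logic for exceptions `L_exc`.
Types are elements of `Ty`, with a distinguished type `Par` of parameters and an
empty type `Emp`; `Sig` is a signature of pure operations. -/

inductive ExcTm (Ty : Type) (Par Emp : Ty) (Sig : Ty → Ty → Type) : Ty → Ty → Type where
  | id (X : Ty) : ExcTm Ty Par Emp Sig X X
  | comp {X Y Z : Ty} (g : ExcTm Ty Par Emp Sig Y Z) (f : ExcTm Ty Par Emp Sig X Y) :
      ExcTm Ty Par Emp Sig X Z
  | gen {X Y : Ty} (s : Sig X Y) : ExcTm Ty Par Emp Sig X Y
  | fromEmpty (Y : Ty) : ExcTm Ty Par Emp Sig Emp Y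
  | throw (Y : Ty) : ExcTm Ty Par Emp Sig Par Y
  | tryCatch {X Y : Ty} (a : ExcTm Ty Par Emp Sig X Y) (b : ExcTm Ty Par Emp Sig Par Y) :
      ExcTm Ty Par Emp Sig X Y

variable {Ty : Type} {Par Emp : Ty} {Sig : Ty → Ty → Type}

/-- The pure terms of `L_exc` (all other terms are propagators). -/
inductive ExcPure : ∀ {X Y : Ty}, ExcTm Ty Par Emp Sig X Y → Prop where
  | id (X : Ty) : ExcPure (ExcTm.id X)
  | comp {X Y Z : Ty} {g : ExcTm Ty Par Emp Sig Y Z} {f : ExcTm Ty Par Emp Sig X Y} :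
      ExcPure g → ExcPure f → ExcPure (ExcTm.comp g f)
  | gen {X Y : Ty} (s : Sig X Y) : ExcPure (ExcTm.gen (Par := Par) (Emp := Emp) s)
  | fromEmpty (Y : Ty) : ExcPure (ExcTm.fromEmpty (Par := Par) (Sig := Sig) Y)

/-- An equation of `L_exc`: a pair of parallel terms. -/
def ExcEqn (Ty : Type) (Par Emp : Ty) (Sig : Ty → Ty → Type) : Type :=
  Σ X : Ty, Σ Y : Ty, ExcTm Ty Par Emp Sig X Y × ExcTm Ty Par Emp Sig X Y

/-- Derivability of equations in `L_exc` from a set `Ax` of axioms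
(`T_exc` is `ExcDeriv Ax` for `Ax` a pure theory `T_eqn`). -/
inductive ExcDeriv (Ax : Set (ExcEqn Ty Par Emp Sig)) :
    ∀ {X Y : Ty}, ExcTm Ty Par Emp Sig X Y → ExcTm Ty Par Emp Sig X Y → Prop where
  | ax {X Y : Ty} {f g : ExcTm Ty Par Emp Sig X Y} :
      (⟨X, Y, (f, g)⟩ : ExcEqn Ty Par Emp Sig) ∈ Ax → ExcDeriv Ax f g
  | refl {X Y : Ty} (f : ExcTm Ty Par Emp Sig X Y) : ExcDeriv Ax f f
  | symm {X Y : Ty} {f g : ExcTm Ty Par Emp Sig X Y} : ExcDeriv Ax f g → ExcDeriv Ax g f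
  | trans {X Y : Ty} {f g h : ExcTm Ty Par Emp Sig X Y} :
      ExcDeriv Ax f g → ExcDeriv Ax g h → ExcDeriv Ax f h
  | subs {X Y Z : Ty} (u : ExcTm Ty Par Emp Sig X Y) {v₁ v₂ : ExcTm Ty Par Emp Sig Y Z} :
      ExcDeriv Ax v₁ v₂ → ExcDeriv Ax (v₁.comp u) (v₂.comp u)
  | repl {X Y Z : Ty} {v₁ v₂ : ExcTm Ty Par Emp Sig X Y} (w : ExcTm Ty Par Emp Sig Y Z) :
      ExcDeriv Ax v₁ v₂ → ExcDeriv Ax (w.comp v₁) (w.comp v₂)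
  | idLeft {X Y : Ty} (f : ExcTm Ty Par Emp Sig X Y) : ExcDeriv Ax ((ExcTm.id Y).comp f) f
  | idRight {X Y : Ty} (f : ExcTm Ty Par Emp Sig X Y) : ExcDeriv Ax (f.comp (ExcTm.id X)) f
  | assoc {W X Y Z : Ty} (h : ExcTm Ty Par Emp Sig Y Z) (g : ExcTm Ty Par Emp Sig X Y)
      (f : ExcTm Ty Par Emp Sig W X) : ExcDeriv Ax ((h.comp g).comp f) (h.comp (g.comp f))
  -- (initial) and (initial₁): any term `Emp → Y` equals `[]_Y`
  | initial {Y : Ty} (a : ExcTm Ty Par Emp Sig Emp Y) : ExcDeriv Ax a (ExcTm.fromEmpty Y)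
  -- (propagate)
  | propagate {X Y : Ty} (a : ExcTm Ty Par Emp Sig X Y) :
      ExcDeriv Ax (a.comp (ExcTm.throw X)) (ExcTm.throw Y)
  -- (recover)
  | recover {X : Ty} (Y : Ty) {u₁ u₂ : ExcTm Ty Par Emp Sig X Par} :
      ExcPure u₁ → ExcPure u₂ →
      ExcDeriv Ax ((ExcTm.throw Y).comp u₁) ((ExcTm.throw Y).comp u₂) → ExcDeriv Ax u₁ u₂
  -- (try)
  | tryCongr {X Y : Ty} {a₁ a₂ : ExcTm Ty Par Emp Sig X Y} (b : ExcTm Ty Par Emp Sig Par Y) :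
      ExcDeriv Ax a₁ a₂ → ExcDeriv Ax (a₁.tryCatch b) (a₂.tryCatch b)
  -- (try₀)
  | try₀ {X Y : Ty} {u : ExcTm Ty Par Emp Sig X Y} (b : ExcTm Ty Par Emp Sig Par Y) :
      ExcPure u → ExcDeriv Ax (u.tryCatch b) u
  -- (try₁)
  | try₁ {X Y : Ty} {u : ExcTm Ty Par Emp Sig X Par} (b : ExcTm Ty Par Emp Sig Par Y) :
      ExcPure u → ExcDeriv Ax ((((ExcTm.throw Y).comp u)).tryCatch b) (b.comp u)

/-- Two sets of equations are `T`-equivalent over `Ax` when they generate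
the same theory over `ExcDeriv Ax`. -/
def ExcEquiv (Ax E₁ E₂ : Set (ExcEqn Ty Par Emp Sig)) : Prop :=
  ∀ (X Y : Ty) (f g : ExcTm Ty Par Emp Sig X Y),
    ExcDeriv (Ax ∪ E₁) f g ↔ ExcDeriv (Ax ∪ E₂) f g

/-- In `L_exc`, every propagator `a : X → Y` is provably equal in `T_exc`
(the theory generated from a pure theory `Ax = T_eqn`) either to a pure term
`u : X → Y`, or to `throw_Y ∘ u` for some pure term `u : X → P`. -/
theorem exc_canonical_form (Ax : Set (ExcEqn Ty Par Emp Sig))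
    (hAx : ∀ e ∈ Ax, ExcPure e.2.2.1 ∧ ExcPure e.2.2.2)
    {X Y : Ty} (a : ExcTm Ty Par Emp Sig X Y) :
    (∃ u : ExcTm Ty Par Emp Sig X Y, ExcPure u ∧ ExcDeriv Ax a u) ∨
    (∃ u : ExcTm Ty Par Emp Sig X Par, ExcPure u ∧
      ExcDeriv Ax a ((ExcTm.throw Y).comp u)) := by
  clear hAx
  induction a with
  | id X => exact Or.inl ⟨_, ExcPure.id X, ExcDeriv.refl _⟩
  | gen s => exact Or.inl ⟨_, ExcPure.gen s, ExcDeriv.refl _⟩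
  | fromEmpty Y => exact Or.inl ⟨_, ExcPure.fromEmpty Y, ExcDeriv.refl _⟩
  | throw Y =>
    exact Or.inr ⟨ExcTm.id Par, ExcPure.id Par, (ExcDeriv.idRight _).symm⟩
  | comp g f ihg ihf =>
    rcases ihf with ⟨u, hu, hf⟩ | ⟨u, hu, hf⟩
    · rcases ihg with ⟨v, hv, hg⟩ | ⟨v, hv, hg⟩
      · exact Or.inl ⟨v.comp u, ExcPure.comp hv hu,
          (ExcDeriv.repl _ hf).trans (ExcDeriv.subs u hg)⟩
      · refine Or.inr ⟨v.comp u, ExcPure.comp hv hu, ?_⟩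
        exact ((ExcDeriv.repl _ hf).trans (ExcDeriv.subs u hg)).trans
          (ExcDeriv.assoc _ _ _)
    · refine Or.inr ⟨u, hu, ?_⟩
      refine (ExcDeriv.repl _ hf).trans ?_
      refine ((ExcDeriv.assoc _ _ _).symm.trans ?_)
      exact ExcDeriv.subs u (ExcDeriv.propagate g)
  | tryCatch a b iha ihb =>
    rcases iha with ⟨u, hu, ha⟩ | ⟨u, hu, ha⟩
    · exact Or.inl ⟨u, hu, (ExcDeriv.tryCongr b ha).trans (ExcDeriv.try₀ b hu)⟩
    · have h1 : ExcDeriv Ax (a.tryCatch b) (b.comp u) :=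
        (ExcDeriv.tryCongr b ha).trans (ExcDeriv.try₁ b hu)
      rcases ihb with ⟨v, hv, hb⟩ | ⟨v, hv, hb⟩
      · exact Or.inl ⟨v.comp u, ExcPure.comp hv hu, h1.trans (ExcDeriv.subs u hb)⟩
      · refine Or.inr ⟨v.comp u, ExcPure.comp hv hu, ?_⟩
        exact (h1.trans (ExcDeriv.subs u hb)).trans (ExcDeriv.assoc _ _ _)
end
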